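/- Let ℓ be a prime number and R a commutative ring in which ℓ is invertible. Let Δ = (ℤ/ℓℤ)ˣ act on C_ℓ = ℤ/ℓℤ by multiplication, let Γ = C_ℓ ⋊ Δ be the corresponding semidirect product, and write σ for the generator 1 of C_ℓ, viewed in Γ. Let Q be a module over the group algebra R[Γ] on which the element Σ_{i=0}^{ℓ-1} σ^i acts as zero. Then the sequence 0 → Q → Q^Δ ⊗_R R[C_ℓ] → Q^Δ → 0 is a short exact sequence, where the first map sends q to Σ_{i=0}^{ℓ-1} ((Σ_{a∈Δ} a·σ^{-i})·q) ⊗ σ^i (each coefficient Σ_{a∈Δ} (a·σ^{-i})·q indeed lies in Q^Δ), and the second map is induced by the augmentation R[C_ℓ] → R. Moreover, both maps are C_ℓ-equivariant, where C_ℓ acts on Q through σ, on Q^Δ ⊗_R R[C_ℓ] through left translation on the factor R[C_ℓ], and trivially on Q^Δ. -/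

import Mathlib

open scoped TensorProduct

set_option maxHeartbeats 1000000

noncomputable section

/-- The action of `Δ = (ℤ/ℓℤ)ˣ` on `C_ℓ = ℤ/ℓℤ` (written multiplicatively) by
multiplication, as a homomorphism to the automorphism group. -/
def deltaAut (ℓ : ℕ) : (ZMod ℓ)ˣ →* MulAut (Multiplicative (ZMod ℓ)) where
  toFun u := AddEquiv.toMultiplicative ((DistribMulAction.toAddAut ((ZMod ℓ)ˣ) (ZMod ℓ)) u)
  map_one' := by
    ext x
    simp
  map_mul' u v := by
    ext x
    simp [mul_smul]

/-- The semidirect product `Γ = C_ℓ ⋊ Δ`. -/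
abbrev Gam (ℓ : ℕ) := Multiplicative (ZMod ℓ) ⋊[deltaAut ℓ] (ZMod ℓ)ˣ

/-- The generator `σ` of `C_ℓ`, i.e. the element `1` of `ℤ/ℓℤ` written multiplicatively. -/
def sigmaGen (ℓ : ℕ) : Multiplicative (ZMod ℓ) := Multiplicative.ofAdd 1

variable (ℓ : ℕ) [NeZero ℓ] (R : Type) [CommRing R]
variable (Q : Type) [AddCommGroup Q] [Module R Q] (ρ : Representation R (Gam ℓ) Q)

/-- The submodule `Q^Δ` of `Δ`-invariants of an `R[Γ]`-module `Q`. -/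
def deltaInvariants : Submodule R Q :=
  Representation.invariants (MonoidHom.comp ρ (SemidirectProduct.inr))

lemma coeff_mem (i : ℕ) (q : Q) :
    (∑ a : (ZMod ℓ)ˣ,
        ρ (SemidirectProduct.inr a * SemidirectProduct.inl ((sigmaGen ℓ ^ i)⁻¹)) q)
      ∈ deltaInvariants ℓ R Q ρ := by
  rw [deltaInvariants, Representation.mem_invariants]
  intro b
  simp only [MonoidHom.comp_apply]
  rw [map_sum]
  have key : ∀ F : (ZMod ℓ)ˣ → Q, ∑ a : (ZMod ℓ)ˣ, F (b * a) = ∑ a : (ZMod ℓ)ˣ, F a :=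
    fun F => Fintype.sum_bijective (fun a => b * a) (Group.mulLeft_bijective b) _ F
      (fun _ => rfl)
  have step : ∀ a : (ZMod ℓ)ˣ,
      ρ (SemidirectProduct.inr b)
        (ρ (SemidirectProduct.inr a * SemidirectProduct.inl ((sigmaGen ℓ ^ i)⁻¹)) q) =
      ρ (SemidirectProduct.inr (b * a) * SemidirectProduct.inl ((sigmaGen ℓ ^ i)⁻¹)) q := by
    intro a
    have h3 : SemidirectProduct.inr (φ := deltaAut ℓ) b *
        (SemidirectProduct.inr a * SemidirectProduct.inl ((sigmaGen ℓ ^ i)⁻¹)) =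
        SemidirectProduct.inr (b * a) * SemidirectProduct.inl ((sigmaGen ℓ ^ i)⁻¹) := by
      rw [← mul_assoc, map_mul]
    rw [← Module.End.mul_apply, ← map_mul, h3]
  rw [Finset.sum_congr rfl fun a _ => step a]
  exact key fun a =>
    ρ (SemidirectProduct.inr a * SemidirectProduct.inl ((sigmaGen ℓ ^ i)⁻¹)) q

/-- The `i`-th coefficient map `q ↦ Σ_{a ∈ Δ} (a·σ^{-i})·q`, viewed as an `R`-linear map
from `Q` to `Q^Δ`. -/
def coeffMap (i : ℕ) : Q →ₗ[R] deltaInvariants ℓ R Q ρ :=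
  LinearMap.codRestrict _
    (∑ a : (ZMod ℓ)ˣ,
      (ρ (SemidirectProduct.inr a * SemidirectProduct.inl ((sigmaGen ℓ ^ i)⁻¹)) : Q →ₗ[R] Q))
    (fun q => by simpa [LinearMap.sum_apply] using coeff_mem ℓ R Q ρ i q)

/-- The first map `Q → Q^Δ ⊗_R R[C_ℓ]`,
`q ↦ Σ_{i=0}^{ℓ-1} (Σ_{a ∈ Δ} (a·σ^{-i})·q) ⊗ σ^i`. -/
def firstMap : Q →ₗ[R] (deltaInvariants ℓ R Q ρ) ⊗[R] (Multiplicative (ZMod ℓ) →₀ R) :=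
  ∑ i ∈ Finset.range ℓ,
    LinearMap.comp ((TensorProduct.mk R (deltaInvariants ℓ R Q ρ)
        (Multiplicative (ZMod ℓ) →₀ R)).flip (Finsupp.single (sigmaGen ℓ ^ i) (1 : R)))
      (coeffMap ℓ R Q ρ i)

/-- The augmentation `R[C_ℓ] → R`. -/
def augmentation : (Multiplicative (ZMod ℓ) →₀ R) →ₗ[R] R :=
  Finsupp.lsum R (fun _ => LinearMap.id)

/-- The second map `Q^Δ ⊗_R R[C_ℓ] → Q^Δ`, induced by the augmentation. -/
def secondMap : (deltaInvariants ℓ R Q ρ) ⊗[R] (Multiplicative (ZMod ℓ) →₀ R) →ₗ[R]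
    deltaInvariants ℓ R Q ρ :=
  LinearMap.comp (TensorProduct.rid R (deltaInvariants ℓ R Q ρ)).toLinearMap
    (TensorProduct.map LinearMap.id (augmentation ℓ R))

/-!
Write `N_C = ∑_{c ∈ C_ℓ} c`, which kills `Q`, and `N_Δ = ∑_{a ∈ Δ} a`, so that the first map is
`q ↦ ∑_d N_Δ(d⁻¹·q) ⊗ d`. The action map `π : x ⊗ d ↦ d·x` inverts it up to a homotopy:
`π ∘ first = ℓ`, because conjugation by `d` sends `a ∈ Δ` to `d^{1-a}·a` and, for `a ≠ 1`,
`d ↦ d^{1-a}` is a bijection of `C_ℓ`, so the sum over `d` is `N_C(a·q) = 0`; and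
`first (π v) = ℓ v - second v ⊗ N_C`, because for `Δ`-invariant `x` the element `N_Δ(e·x)` is the
sum of `e^a·x` over `a ∈ Δ`, which is `N_C x - x = -x` unless `e = 1`. As `ℓ` is invertible,
these identities together with `second ∘ first = 0` give exactness.
-/

open Multiplicative SemidirectProduct TensorProduct

theorem Fintype.sum_units_add_apply_zero {K M : Type*} [GroupWithZero K] [Fintype K]
    [DecidableEq K] [AddCommMonoid M] (g : K → M) : ∑ a : Kˣ, g a + g 0 = ∑ x, g x := by
  rw [← Finset.sum_erase_add _ _ (Finset.mem_univ (0 : K)),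
    Finset.sum_subtype (p := (· ≠ 0)) _ (by simp) g]
  congr 1
  exact Fintype.sum_equiv unitsEquivNeZero _ _ fun _ => rfl

theorem Fintype.sum_apply_mul_left {K M : Type*} [GroupWithZero K] [Fintype K] [DecidableEq K]
    [AddCommMonoid M] (f : K → M) (m : K) :
    ∑ x, f (m * x) = if m = 0 then Fintype.card K • f 0 else ∑ x, f x := by
  split_ifs with hm
  · simp [hm]
  · exact Fintype.sum_equiv (Equiv.mulLeft₀ m hm) _ _ fun _ => rfl

theorem Representation.norm_apply_mem_invariants {k G V : Type*} [CommRing k] [Group G]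
    [Fintype G] [AddCommGroup V] [Module k V] (ρ : Representation k G V) (v : V) :
    Representation.norm ρ v ∈ ρ.invariants :=
  fun g => Representation.self_norm_apply ρ g v

theorem MonoidAlgebra.coeffLinearEquiv_ofMulAction_single {k G : Type*} [CommSemiring k]
    [Monoid G] (c d : G) (r : k) :
    ((MonoidAlgebra.coeffLinearEquiv k).toLinearMap ∘ₗ Representation.ofMulAction k G G c ∘ₗ
      (MonoidAlgebra.coeffLinearEquiv k).symm.toLinearMap) (Finsupp.single d r) =
      Finsupp.single (c * d) r := by
  simp [MonoidAlgebra.coeffLinearEquiv_symm_apply, Representation.ofMulAction_single]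

section Homotopy

variable {R M N P : Type*} [CommRing R] [AddCommGroup M] [AddCommGroup N] [AddCommGroup P]
  [Module R M] [Module R N] [Module R P] {f : M →ₗ[R] N} {g : N →ₗ[R] P} {u : R}

theorem LinearMap.injective_of_comp_eq_smul_id (p : N →ₗ[R] M) (hu : IsUnit u)
    (hpf : p ∘ₗ f = u • LinearMap.id) : Function.Injective f := fun x y hxy => by
  rw [← hu.smul_left_cancel]
  simpa using congr($hpf x).symm.trans (congr(p $hxy).trans congr($hpf y))

theorem LinearMap.range_eq_ker_of_comp_eq_smul_id_sub (p : N →ₗ[R] M) (s : P →ₗ[R] N)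
    (hu : IsUnit u) (hgf : g ∘ₗ f = 0) (hfp : f ∘ₗ p = u • LinearMap.id - s ∘ₗ g) :
    LinearMap.range f = LinearMap.ker g := by
  refine le_antisymm (LinearMap.range_le_ker_iff.mpr hgf) fun v hv =>
    ⟨(hu.unit⁻¹ : Rˣ) • p v, ?_⟩
  rw [LinearMap.mem_ker] at hv
  have hfpv : f (p v) = u • v := by simpa [hv] using congr($hfp v)
  rw [Units.smul_def, map_smul, hfpv, smul_smul, hu.val_inv_mul, one_smul]

end Homotopy

section Gam

variable {ℓ : ℕ} {R Q : Type} [CommRing R] [AddCommGroup Q] [Module R Q]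
  (ρ : Representation R (Gam ℓ) Q)

theorem deltaAut_apply (a : (ZMod ℓ)ˣ) (x : Multiplicative (ZMod ℓ)) :
    deltaAut ℓ a x = ofAdd (a * x.toAdd) := by
  simp [deltaAut, Units.smul_def]

theorem inr_mul_inl_eq (a : (ZMod ℓ)ˣ) (x : Multiplicative (ZMod ℓ)) :
    (inr a * inl x : Gam ℓ) = inl (ofAdd (a * x.toAdd)) * inr a := by
  rw [← deltaAut_apply, inl_aut, map_inv, inv_mul_cancel_right]

theorem inl_mul_inr_mul_inl_inv (d : Multiplicative (ZMod ℓ)) (a : (ZMod ℓ)ˣ) :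
    (inl d * inr a * inl d⁻¹ : Gam ℓ) = inl (ofAdd ((1 - a) * d.toAdd)) * inr a := by
  rw [mul_assoc, inr_mul_inl_eq, ← mul_assoc, ← map_mul]
  congr 2
  apply toAdd.injective
  simp
  ring

def actionMap :
    deltaInvariants ℓ R Q ρ ⊗[R] (Multiplicative (ZMod ℓ) →₀ R) →ₗ[R] Q :=
  TensorProduct.lift (Finsupp.lsum R fun c =>
    LinearMap.toSpanSingleton R _ ((ρ (inl c)).comp (deltaInvariants ℓ R Q ρ).subtype)).flip

theorem actionMap_tmul_single (x : deltaInvariants ℓ R Q ρ) (c : Multiplicative (ZMod ℓ))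
    (r : R) : actionMap ρ (x ⊗ₜ Finsupp.single c r) = r • ρ (inl c) x := by
  simp [actionMap]

theorem secondMap_tmul_single (x : deltaInvariants ℓ R Q ρ) (c : Multiplicative (ZMod ℓ))
    (r : R) : secondMap ℓ R Q ρ (x ⊗ₜ Finsupp.single c r) = r • x := by
  simp [secondMap, augmentation]

theorem secondMap_comp_map_translate (c : Multiplicative (ZMod ℓ)) :
    secondMap ℓ R Q ρ ∘ₗ TensorProduct.map LinearMap.id
      ((MonoidAlgebra.coeffLinearEquiv R).toLinearMap ∘ₗ
        Representation.ofMulAction R _ (Multiplicative (ZMod ℓ)) c ∘ₗ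
        (MonoidAlgebra.coeffLinearEquiv R).symm.toLinearMap) = secondMap ℓ R Q ρ := by
  ext x d
  simp [MonoidAlgebra.coeffLinearEquiv_ofMulAction_single, secondMap_tmul_single]

variable [NeZero ℓ]

theorem sum_range_sigmaGen_pow {M : Type*} [AddCommMonoid M]
    (F : Multiplicative (ZMod ℓ) → M) :
    ∑ i ∈ Finset.range ℓ, F (sigmaGen ℓ ^ i) = ∑ c, F c := by
  refine Finset.sum_nbij' (fun i => sigmaGen ℓ ^ i) (fun c => c.toAdd.val) (by simp)
    (fun c _ => Finset.mem_range.2 (ZMod.val_lt _)) (fun i hi => ?_) (fun c _ => ?_)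
    (fun _ _ => rfl)
  · simp [sigmaGen, ← ofAdd_nsmul, ZMod.val_natCast_of_lt (Finset.mem_range.1 hi)]
  · simp [sigmaGen, ← ofAdd_nsmul]

def deltaNorm : Q →ₗ[R] deltaInvariants ℓ R Q ρ :=
  LinearMap.codRestrict _ (Representation.norm (ρ.comp inr))
    (Representation.norm_apply_mem_invariants _)

theorem coe_deltaNorm_apply (q : Q) :
    (deltaNorm ρ q : Q) = ∑ a : (ZMod ℓ)ˣ, ρ (inr a) q := by
  simp [deltaNorm, Representation.norm, LinearMap.sum_apply]

theorem coeffMap_apply (i : ℕ) (q : Q) :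
    coeffMap ℓ R Q ρ i q = deltaNorm ρ (ρ (inl (sigmaGen ℓ ^ i)⁻¹) q) := by
  ext
  simp [coeffMap, coe_deltaNorm_apply, LinearMap.sum_apply]

theorem firstMap_apply (q : Q) :
    firstMap ℓ R Q ρ q = ∑ d, deltaNorm ρ (ρ (inl d⁻¹) q) ⊗ₜ Finsupp.single d 1 := by
  simp only [firstMap, LinearMap.sum_apply, LinearMap.comp_apply, coeffMap_apply]
  exact sum_range_sigmaGen_pow fun d => deltaNorm ρ (ρ (inl d⁻¹) q) ⊗ₜ Finsupp.single d 1

theorem firstMap_inl_apply (c : Multiplicative (ZMod ℓ)) (q : Q) :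
    firstMap ℓ R Q ρ (ρ (inl c) q) =
      TensorProduct.map LinearMap.id
        ((MonoidAlgebra.coeffLinearEquiv R).toLinearMap ∘ₗ
          Representation.ofMulAction R _ (Multiplicative (ZMod ℓ)) c ∘ₗ
          (MonoidAlgebra.coeffLinearEquiv R).symm.toLinearMap)
        (firstMap ℓ R Q ρ q) := by
  simp only [firstMap_apply, map_sum, TensorProduct.map_tmul, LinearMap.id_apply,
    MonoidAlgebra.coeffLinearEquiv_ofMulAction_single]
  refine Fintype.sum_equiv (Equiv.mulLeft c⁻¹) _ _ fun d => ?_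
  simp only [Equiv.coe_mulLeft, mul_inv_cancel_left, mul_inv_rev, inv_inv, map_mul,
    Module.End.mul_apply]

theorem secondMap_comp_firstMap (hN : Representation.norm (ρ.comp inl) = 0) :
    secondMap ℓ R Q ρ ∘ₗ firstMap ℓ R Q ρ = 0 := by
  ext q
  have hinv :
      ∑ d : Multiplicative (ZMod ℓ), ρ (inl d⁻¹) q = Representation.norm (ρ.comp inl) q :=
    (Fintype.sum_equiv (Equiv.inv _) _ (fun d => ρ (inl d) q) fun _ => rfl).trans
      (by simp [Representation.norm, LinearMap.sum_apply])
  simp only [LinearMap.comp_apply, firstMap_apply, map_sum, secondMap_tmul_single, one_smul]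
  rw [← map_sum, hinv, hN, LinearMap.zero_apply, map_zero, LinearMap.zero_apply]

variable [Fact ℓ.Prime]

theorem sum_inl_ofAdd_mul (hN : Representation.norm (ρ.comp inl) = 0) (m : ZMod ℓ) (y : Q) :
    ∑ x : ZMod ℓ, ρ (inl (ofAdd (m * x))) y = if m = 0 then ℓ • y else 0 := by
  rw [Fintype.sum_apply_mul_left fun x => ρ (inl (ofAdd x)) y]
  split_ifs
  · simp
  · exact (Fintype.sum_equiv ofAdd _ (fun d => ρ (inl d) y) fun _ => rfl).trans
      (by simpa [Representation.norm, LinearMap.sum_apply] using congr($hN y))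

theorem deltaNorm_inl_apply_of_invariant (hN : Representation.norm (ρ.comp inl) = 0)
    (e : Multiplicative (ZMod ℓ)) (x : deltaInvariants ℓ R Q ρ) :
    deltaNorm ρ (ρ (inl e) x) = (if e = 1 then (ℓ : R) • x else 0) - x := by
  have hx : ∀ a : (ZMod ℓ)ˣ, ρ (inr a) x = x := x.2
  have hsum := Fintype.sum_units_add_apply_zero fun y : ZMod ℓ =>
    ρ (inl (ofAdd (y * e.toAdd))) (x : Q)
  simp only [mul_comm _ e.toAdd, sum_inl_ofAdd_mul ρ hN, toAdd_eq_zero] at hsum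
  ext
  calc (deltaNorm ρ (ρ (inl e) x) : Q)
      = ∑ a : (ZMod ℓ)ˣ, ρ (inl (ofAdd (e.toAdd * a))) x := by
        rw [coe_deltaNorm_apply]
        refine Finset.sum_congr rfl fun a _ => ?_
        rw [← Module.End.mul_apply, ← map_mul, inr_mul_inl_eq, map_mul, Module.End.mul_apply,
          hx, mul_comm]
    _ = _ := by
        rw [eq_sub_iff_add_eq.mpr hsum]
        split_ifs <;> simp [Nat.cast_smul_eq_nsmul]

theorem actionMap_comp_firstMap (hN : Representation.norm (ρ.comp inl) = 0) :
    actionMap ρ ∘ₗ firstMap ℓ R Q ρ = (ℓ : R) • LinearMap.id := by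
  ext q
  calc actionMap ρ (firstMap ℓ R Q ρ q)
      = ∑ a : (ZMod ℓ)ˣ, ∑ x : ZMod ℓ, ρ (inl (ofAdd ((1 - a) * x))) (ρ (inr a) q) := by
        simp only [firstMap_apply, map_sum, actionMap_tmul_single, one_smul, coe_deltaNorm_apply]
        rw [Finset.sum_comm]
        refine Finset.sum_congr rfl fun a _ => Fintype.sum_equiv toAdd _ _ fun d => ?_
        rw [← Module.End.mul_apply, ← map_mul, ← Module.End.mul_apply, ← map_mul,
          inl_mul_inr_mul_inl_inv, map_mul, Module.End.mul_apply]
    _ = ∑ a : (ZMod ℓ)ˣ, if a = 1 then (ℓ : R) • q else 0 := by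
        refine Finset.sum_congr rfl fun a _ => ?_
        have h1a : (1 - a : ZMod ℓ) = 0 ↔ a = 1 := by
          rw [sub_eq_zero, eq_comm, Units.val_eq_one]
        by_cases ha : a = 1 <;>
          simp [sum_inl_ofAdd_mul ρ hN, h1a, ha, Nat.cast_smul_eq_nsmul]
    _ = _ := by simp

theorem firstMap_inl_apply_of_invariant (hN : Representation.norm (ρ.comp inl) = 0)
    (c : Multiplicative (ZMod ℓ)) (x : deltaInvariants ℓ R Q ρ) :
    firstMap ℓ R Q ρ (ρ (inl c) x) =
      (ℓ : R) • (x ⊗ₜ Finsupp.single c 1) - x ⊗ₜ ∑ d, Finsupp.single d 1 := by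
  have hcomp : ∀ d, ρ (inl d⁻¹) (ρ (inl c) x) = ρ (inl (d⁻¹ * c)) x := fun d => by
    rw [map_mul, map_mul, Module.End.mul_apply]
  simp only [firstMap_apply, hcomp, deltaNorm_inl_apply_of_invariant ρ hN, inv_mul_eq_one,
    sub_tmul, Finset.sum_sub_distrib, ite_tmul, Finset.sum_ite_eq', Finset.mem_univ, if_true,
    ← tmul_sum, smul_tmul']

theorem firstMap_comp_actionMap (hN : Representation.norm (ρ.comp inl) = 0) :
    firstMap ℓ R Q ρ ∘ₗ actionMap ρ = (ℓ : R) • LinearMap.id -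
      (TensorProduct.mk R _ _).flip (∑ d, Finsupp.single d 1) ∘ₗ secondMap ℓ R Q ρ := by
  ext x c
  simp [actionMap_tmul_single, firstMap_inl_apply_of_invariant ρ hN, secondMap_tmul_single,
    tmul_sum]

end Gam

/-- Let `ℓ` be a prime and `R` a commutative ring in which `ℓ` is invertible.  Let
`Γ = C_ℓ ⋊ Δ` with `Δ = (ℤ/ℓℤ)ˣ` acting on `C_ℓ` by multiplication, and let `σ` denote
the generator `1` of `C_ℓ`.  Let `Q` be an `R[Γ]`-module on which `Σ_{i=0}^{ℓ-1} σ^i`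
acts as zero.  Then `0 → Q → Q^Δ ⊗_R R[C_ℓ] → Q^Δ → 0` is a short exact sequence, where
the first map sends `q` to `Σ_{i=0}^{ℓ-1} ((Σ_{a ∈ Δ} a·σ^{-i})·q) ⊗ σ^i` and the second
map is induced by the augmentation `R[C_ℓ] → R`.  Moreover both maps are
`C_ℓ`-equivariant, where `C_ℓ` acts on `Q` through `σ`, on `Q^Δ ⊗_R R[C_ℓ]` through left
translation on the factor `R[C_ℓ]`, and trivially on `Q^Δ`. -/
theorem firstMap_secondMap_shortExact_and_equivariant
    (hℓ : ℓ.Prime) (hu : IsUnit (ℓ : R))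
    (hsum : ∀ q : Q, ∑ i ∈ Finset.range ℓ, ρ (SemidirectProduct.inl (sigmaGen ℓ ^ i)) q = 0) :
    Function.Injective (firstMap ℓ R Q ρ) ∧
    LinearMap.range (firstMap ℓ R Q ρ) = LinearMap.ker (secondMap ℓ R Q ρ) ∧
    Function.Surjective (secondMap ℓ R Q ρ) ∧
    (∀ (c : Multiplicative (ZMod ℓ)) (q : Q),
      firstMap ℓ R Q ρ (ρ (SemidirectProduct.inl c) q) =
        TensorProduct.map LinearMap.id
          ((MonoidAlgebra.coeffLinearEquiv R).toLinearMap ∘ₗ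
            Representation.ofMulAction R (Multiplicative (ZMod ℓ)) (Multiplicative (ZMod ℓ)) c ∘ₗ
            (MonoidAlgebra.coeffLinearEquiv R).symm.toLinearMap)
          (firstMap ℓ R Q ρ q)) ∧
    (∀ (c : Multiplicative (ZMod ℓ))
        (v : (deltaInvariants ℓ R Q ρ) ⊗[R] (Multiplicative (ZMod ℓ) →₀ R)),
      secondMap ℓ R Q ρ
          (TensorProduct.map LinearMap.id
            ((MonoidAlgebra.coeffLinearEquiv R).toLinearMap ∘ₗ
            Representation.ofMulAction R (Multiplicative (ZMod ℓ)) (Multiplicative (ZMod ℓ)) c ∘ₗ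
            (MonoidAlgebra.coeffLinearEquiv R).symm.toLinearMap)
            v) =
        secondMap ℓ R Q ρ v) := by
  have : Fact ℓ.Prime := ⟨hℓ⟩
  have hN : Representation.norm (ρ.comp inl) = 0 := LinearMap.ext fun q => by
    specialize hsum q
    rw [sum_range_sigmaGen_pow fun c => ρ (inl c) q] at hsum
    simpa [Representation.norm, LinearMap.sum_apply] using hsum
  refine ⟨LinearMap.injective_of_comp_eq_smul_id _ hu (actionMap_comp_firstMap ρ hN),
    LinearMap.range_eq_ker_of_comp_eq_smul_id_sub (actionMap ρ) _ hu
      (secondMap_comp_firstMap ρ hN) (firstMap_comp_actionMap ρ hN),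
    fun x => ⟨x ⊗ₜ Finsupp.single 1 1, by rw [secondMap_tmul_single, one_smul]⟩,
    firstMap_inl_apply ρ, fun c v => congr($(secondMap_comp_map_translate ρ c) v)⟩

end
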